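/- arXiv:2308.06852 — 4 statements merged into one kernel-verified Lean document; each statement's English description precedes it below -/
import Mathlib

section
/- Let (R,V) be a generalized root system and let α ∈ R be a primitive root. Then there exists a base S of R such that α ∈ S. -/
open scoped RealInnerProductSpace

variable {V : Type*} [NormedAddCommGroup V] [InnerProductSpace ℝ V] [FiniteDimensional ℝ V]

/-- A generalized root system: `R` is a nonempty finite spanning set such that for
`α, β ∈ R`: `⟪α,β⟫ < 0` implies `α+β ∈ R`; `⟪α,β⟫ > 0` implies `α-β ∈ R`; and
`⟪α,β⟫ = 0` implies `α+β ∈ R ↔ α-β ∈ R`. -/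
def IsGRS (R : Set V) : Prop :=
  R.Nonempty ∧ R.Finite ∧ Submodule.span ℝ R = ⊤ ∧
    ∀ α ∈ R, ∀ β ∈ R,
      (⟪α, β⟫ < 0 → α + β ∈ R) ∧
      (0 < ⟪α, β⟫ → α - β ∈ R) ∧
      (⟪α, β⟫ = 0 → (α + β ∈ R ↔ α - β ∈ R))

/-- `v` is a linear combination of elements of `S` with nonnegative integer coefficients. -/
def IsNonnegIntComb (S : Set V) (v : V) : Prop :=
  ∃ c : V →₀ ℤ, ↑c.support ⊆ S ∧ (∀ α, 0 ≤ c α) ∧ v = c.sum fun α n => (n : ℝ) • α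

/-- A base of a GRS `R`: a subset of `R` which is a vector-space basis of `V` such that
every root is a linear combination of `S` with coefficients all nonnegative integers or
all nonpositive integers. -/
def IsBase (R S : Set V) : Prop :=
  S ⊆ R ∧ LinearIndependent ℝ ((↑) : S → V) ∧ Submodule.span ℝ S = ⊤ ∧
    ∀ β ∈ R, IsNonnegIntComb S β ∨ IsNonnegIntComb S (-β)

/-- `R⁺(S)`: the roots whose coefficients in `S` are all nonnegative integers. -/
def posRoots (R S : Set V) : Set V := {β ∈ R | IsNonnegIntComb S β}

/-- The partial order `≺_S`: `x ≺_S y` iff `y - x` is a nonnegative integer combination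
of `S`. -/
def prec (S : Set V) (x y : V) : Prop := IsNonnegIntComb S (y - x)

/-- `β` is indecomposable in `P`: `β ∈ P` and `β` is not the sum of two nonzero
elements of `P`. -/
def IsIndecomposableIn (P : Set V) (β : V) : Prop :=
  β ∈ P ∧ ¬∃ γ ∈ P, ∃ δ ∈ P, γ ≠ 0 ∧ δ ≠ 0 ∧ β = γ + δ

/-- A positive system of `R`. -/
def IsPositiveSystem (R P : Set V) : Prop :=
  P ⊆ R ∧ (∀ α ∈ P, ∀ β ∈ P, α + β ∈ R → α + β ∈ P) ∧ R = P ∪ -P ∧ P ∩ -P = {0}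

/-- Irreducibility of a GRS. -/
def IsIrreducibleGRS (R : Set V) : Prop :=
  ∀ R₁ R₂ : Set V, R = R₁ ∪ R₂ → (∀ α ∈ R₁, ∀ β ∈ R₂, ⟪α, β⟫ = 0) →
    R₁ ⊆ {0} ∨ R₂ ⊆ {0}

/-- A primitive root of `R`. -/
def IsPrimitive (R : Set V) (α : V) : Prop :=
  α ∈ R ∧ α ≠ 0 ∧ ∀ (k : ℤ) (α' : V), 0 < k → α' ∈ R → α = (k : ℝ) • α' → k = 1

/-- The orthogonal projection `π_I` of `V` onto the orthogonal complement of the span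
of `I`. -/
noncomputable def projAway (I : Set V) : V → ↥((Submodule.span ℝ I)ᗮ) :=
  fun v => Submodule.orthogonalProjectionOnto ((Submodule.span ℝ I)ᗮ) v

/-- A root system. -/
def IsRootSystem (Δ : Set V) : Prop :=
  Δ.Finite ∧ (0 : V) ∉ Δ ∧ Submodule.span ℝ Δ = ⊤ ∧
    ∀ α ∈ Δ, ∀ β ∈ Δ,
      (β - (2 * ⟪β, α⟫ / ⟪α, α⟫) • α ∈ Δ) ∧
      (∃ n : ℤ, 2 * ⟪β, α⟫ / ⟪α, α⟫ = (n : ℝ)) ∧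
      ∀ t : ℝ, t • α ∈ Δ → t = 1 ∨ t = -1

/-!
Choose `u` orthogonal to no nonzero root such that `⟪u, α⟫` is the least positive value of
`⟪u, ·⟫` on `R`: take `w ⊥ α` vanishing on no root outside `ℝ ∙ α` and tilt it slightly towards
`α`; on the multiples `t • α ∈ R` minimality holds because primitivity forces `t ≥ 1` once
`t > 0`. The roots indecomposable in the half space `⟪u, ·⟫ > 0` then form a base: every positive
root is a sum of them, and they are pairwise obtuse, hence linearly independent, because `γ - δ`
is a root whenever `⟪γ, δ⟫ > 0`. Minimality of `⟪u, α⟫` makes `α` indecomposable.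
-/

open Topology

variable {E : Type*} [NormedAddCommGroup E] [InnerProductSpace ℝ E]

namespace IsNonnegIntComb

variable {S : Set E} {x y : E}

lemma zero (S : Set E) : IsNonnegIntComb S 0 :=
  ⟨0, by simp, fun _ => le_rfl, by simp⟩

lemma of_mem (hx : x ∈ S) : IsNonnegIntComb S x :=
  ⟨Finsupp.single x 1, by simpa using hx, Finsupp.single_nonneg.mpr zero_le_one, by simp⟩

lemma add (hx : IsNonnegIntComb S x) (hy : IsNonnegIntComb S y) : IsNonnegIntComb S (x + y) := by
  classical
  obtain ⟨c, hcS, hc, rfl⟩ := hx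
  obtain ⟨d, hdS, hd, rfl⟩ := hy
  refine ⟨c + d, ?_, fun a => add_nonneg (hc a) (hd a), ?_⟩
  · exact (Finset.coe_subset.mpr Finsupp.support_add).trans (by simpa using ⟨hcS, hdS⟩)
  · rw [Finsupp.sum_add_index' (fun _ => by simp) fun _ _ _ => by push_cast; exact add_smul ..]

lemma of_mem_closure (hx : x ∈ AddSubmonoid.closure S) : IsNonnegIntComb S x :=
  AddSubmonoid.closure_induction (fun _ => of_mem) (zero S) (fun _ _ _ _ => add) hx

lemma mem_span (hx : IsNonnegIntComb S x) : x ∈ Submodule.span ℝ S := by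
  obtain ⟨c, hcS, -, rfl⟩ := hx
  exact Submodule.sum_mem _ fun a ha => Submodule.smul_mem _ _ (Submodule.subset_span (hcS ha))

end IsNonnegIntComb

lemma exists_nat_mul_eq_of_forall_sub_mem {T : Set ℝ} {t₀ : ℝ} (ht₀ : t₀ ∈ T) (ht₀_pos : 0 < t₀)
    (ht₀_le : ∀ t ∈ T, t₀ ≤ t) (hsub : ∀ s ∈ T, ∀ t ∈ T, s < t → t - s ∈ T) {t : ℝ}
    (ht : t ∈ T) : ∃ n : ℕ, t = n * t₀ := by
  suffices key : ∀ n : ℕ, ∀ t ∈ T, t ≤ n * t₀ → ∃ m : ℕ, t = m * t₀ by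
    obtain ⟨n, hn⟩ := exists_nat_ge (t / t₀)
    exact key n t ht ((div_le_iff₀ ht₀_pos).mp hn)
  intro n
  induction n with
  | zero =>
    intro t ht hle
    simp only [Nat.cast_zero, zero_mul] at hle
    linarith [ht₀_le t ht]
  | succ n ih =>
    intro t ht hle
    rcases (ht₀_le t ht).eq_or_lt with rfl | hlt
    · exact ⟨1, by simp⟩
    · obtain ⟨m, hm⟩ := ih (t - t₀) (hsub t₀ ht₀ t ht hlt) (by push_cast at hle; linarith)
      exact ⟨m + 1, by push_cast; linarith⟩

/-- A finite union of proper hyperplanes cannot cover the subspace `K`. -/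
lemma Submodule.exists_mem_forall_inner_ne_zero (K : Submodule ℝ E) {B : Set E} (hB : B.Finite)
    (hBK : ∀ β ∈ B, β ∉ Kᗮ) : ∃ w ∈ K, ∀ β ∈ B, ⟪w, β⟫ ≠ 0 := by
  have : Finite B := hB.to_subtype
  have hex : ∀ β : B, ∃ w ∈ K, innerₗ E β w ≠ 0 := fun β => by
    simpa [Submodule.mem_orthogonal, real_inner_comm] using hBK β β.2
  obtain ⟨w, hwK, hw⟩ := Module.Dual.exists_forall_mem_ne_zero_of_forall_exists K _ hex
  exact ⟨w, hwK, fun β hβ => by simpa [real_inner_comm] using hw ⟨β, hβ⟩⟩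

lemma exists_inner_pos_lt_abs_inner {α : E} (hα : α ≠ 0) {B : Set E} (hB : B.Finite)
    (hBα : ∀ β ∈ B, β ∉ ℝ ∙ α) : ∃ u : E, 0 < ⟪u, α⟫ ∧ ∀ β ∈ B, ⟪u, α⟫ < |⟪u, β⟫| := by
  obtain ⟨w, hw_orth, hw⟩ := (ℝ ∙ α)ᗮ.exists_mem_forall_inner_ne_zero hB
    (by simpa only [Submodule.orthogonal_orthogonal] using hBα)
  have hwα : ⟪w, α⟫ = 0 := Submodule.mem_orthogonal_singleton_iff_inner_left.mp hw_orth
  have hnear : ∀ β ∈ B, ∀ᶠ ε in 𝓝 (0 : ℝ), ε * ⟪α, α⟫ < |⟪w + ε • α, β⟫| := fun β hβ =>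
    ContinuousAt.eventually_lt (by fun_prop) (by fun_prop) (by simpa using hw β hβ)
  obtain ⟨ε, hεB, hε⟩ :=
    ((hB.eventually_all.mpr hnear).filter_mono nhdsWithin_le_nhds |>.and
      self_mem_nhdsWithin).exists (f := 𝓝[>] (0 : ℝ))
  have hu : ⟪w + ε • α, α⟫ = ε * ⟪α, α⟫ := by
    rw [inner_add_left, hwα, real_inner_smul_left, zero_add]
  refine ⟨w + ε • α, ?_, fun β hβ => ?_⟩
  · rw [hu]
    exact mul_pos hε (real_inner_self_pos.mpr hα)
  · rw [hu]
    exact hεB β hβ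

namespace IsGRS

variable {R : Set E}

lemma finite (hR : IsGRS R) : R.Finite := hR.2.1

lemma span_eq_top (hR : IsGRS R) : Submodule.span ℝ R = ⊤ := hR.2.2.1

lemma sub_mem_of_inner_pos (hR : IsGRS R) {β γ : E} (hβ : β ∈ R) (hγ : γ ∈ R)
    (h : 0 < ⟪β, γ⟫) : β - γ ∈ R :=
  (hR.2.2.2 β hβ γ hγ).2.1 h

lemma zero_mem (hR : IsGRS R) : (0 : E) ∈ R := by
  obtain ⟨α, hα⟩ := hR.1
  rcases eq_or_ne α 0 with rfl | hα0
  · exact hα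
  · simpa using hR.sub_mem_of_inner_pos hα hα (real_inner_self_pos.mpr hα0)

lemma neg_mem (hR : IsGRS R) {β : E} (hβ : β ∈ R) : -β ∈ R := by
  have h := (hR.2.2.2 0 hR.zero_mem β hβ).2.2 (inner_zero_left _)
  simpa using h.mp (by simpa using hβ)

end IsGRS

namespace IsPrimitive

variable {R : Set E} {α : E}

/-- The positive multiples of `α` lying in `R` are closed under positive differences, so by
Euclid they are multiples of the least one, `t₀ • α`; primitivity of `α = n • (t₀ • α)` forces
`t₀ = 1`. -/
lemma one_le_of_smul_mem (hR : IsGRS R) (hα : IsPrimitive R α) {t : ℝ} (ht : 0 < t)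
    (htα : t • α ∈ R) : 1 ≤ t := by
  obtain ⟨hαR, hα0, hprim⟩ := hα
  set T : Set ℝ := {s | 0 < s ∧ s • α ∈ R}
  have hT : T.Finite :=
    (hR.finite.preimage (smul_left_injective ℝ hα0).injOn).subset fun s hs => hs.2
  have h1T : (1 : ℝ) ∈ T := ⟨one_pos, by rwa [one_smul]⟩
  have hsub : ∀ s ∈ T, ∀ r ∈ T, s < r → r - s ∈ T := by
    rintro s ⟨hs, hsR⟩ r ⟨hr, hrR⟩ hsr
    refine ⟨sub_pos.mpr hsr, ?_⟩
    rw [sub_smul]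
    refine hR.sub_mem_of_inner_pos hrR hsR ?_
    rw [real_inner_smul_left, real_inner_smul_right]
    have := real_inner_self_pos.mpr hα0
    positivity
  obtain ⟨t₀, ht₀, ht₀_le⟩ := Set.exists_min_image T id hT ⟨1, h1T⟩
  obtain ⟨n, hn⟩ := exists_nat_mul_eq_of_forall_sub_mem ht₀ ht₀.1 ht₀_le hsub h1T
  have hn1 : (n : ℤ) = 1 := by
    refine hprim n (t₀ • α) ?_ ht₀.2 ?_
    · exact_mod_cast Nat.pos_of_ne_zero (by rintro rfl; simp at hn)
    · rw [smul_smul]; push_cast; rw [← hn, one_smul]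
  have ht₀_one : t₀ = 1 := by norm_cast at hn1; simpa [hn1] using hn.symm
  exact ht₀_one ▸ ht₀_le t ⟨ht, htα⟩

lemma exists_inner_ne_zero_inner_le (hR : IsGRS R) (hα : IsPrimitive R α) :
    ∃ u : E, (∀ β ∈ R, β ≠ 0 → ⟪u, β⟫ ≠ 0) ∧ 0 < ⟪u, α⟫ ∧
      ∀ β ∈ R, 0 < ⟪u, β⟫ → ⟪u, α⟫ ≤ ⟪u, β⟫ := by
  obtain ⟨u, hα_pos, hu⟩ := exists_inner_pos_lt_abs_inner hα.2.1
    (hR.finite.subset (Set.sep_subset R (· ∉ ℝ ∙ α))) fun β hβ => hβ.2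
  have key : ∀ β ∈ R, β ≠ 0 → (⟪u, β⟫ ≠ 0 ∧ (0 < ⟪u, β⟫ → ⟪u, α⟫ ≤ ⟪u, β⟫)) := by
    intro β hβR hβ0
    by_cases hβα : β ∈ ℝ ∙ α
    · obtain ⟨t, rfl⟩ := Submodule.mem_span_singleton.mp hβα
      have ht : t ≠ 0 := by rintro rfl; simp at hβ0
      rw [real_inner_smul_right]
      refine ⟨mul_ne_zero ht hα_pos.ne', fun h => ?_⟩
      have := one_le_of_smul_mem hR hα (pos_of_mul_pos_left h hα_pos.le) hβR
      nlinarith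
    · have := hu β ⟨hβR, hβα⟩
      exact ⟨fun h => by simp [h] at this; linarith, fun h => (abs_of_pos h ▸ this).le⟩
  refine ⟨u, fun β hβR hβ0 => (key β hβR hβ0).1, hα_pos, fun β hβR hβ => ?_⟩
  exact (key β hβR (by rintro rfl; simp at hβ)).2 hβ

end IsPrimitive

section Base

variable {R : Set E} {u : E}

lemma Set.Finite.isNonnegIntComb_of_inner_pos (hR : R.Finite) {β : E} (hβ : β ∈ R)
    (hβu : 0 < ⟪u, β⟫) : IsNonnegIntComb {γ | IsIndecomposableIn {γ ∈ R | 0 < ⟪u, γ⟫} γ} β := by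
  have : Finite R := hR.to_subtype
  set f : E →+ ℝ := (innerₗ E u).toAddMonoidHom
  have hbase : ((↑) : R → E) '' IsAddIndecomposable.baseOf (↑) f ⊆
      {γ | IsIndecomposableIn {γ ∈ R | 0 < ⟪u, γ⟫} γ} := by
    rintro - ⟨⟨γ, hγR⟩, ⟨hγu, hγ⟩, rfl⟩
    refine ⟨⟨hγR, hγu⟩, ?_⟩
    rintro ⟨δ, ⟨hδR, hδu⟩, ε, ⟨hεR, hεu⟩, hδ0, hε0, hγδε⟩
    exact (hγ ⟨δ, hδR⟩ hδu ⟨ε, hεR⟩ hεu hγδε).elim hδ0 hε0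
  refine IsNonnegIntComb.of_mem_closure (AddSubmonoid.closure_mono hbase ?_)
  rw [AddSubmonoid.closure_image_isAddIndecomposable_baseOf]
  exact AddSubmonoid.subset_closure ⟨⟨β, hβ⟩, hβu, rfl⟩

namespace IsGRS

lemma inner_nonpos_of_isIndecomposableIn (hR : IsGRS R) (hu : ∀ β ∈ R, β ≠ 0 → ⟪u, β⟫ ≠ 0)
    {γ δ : E} (hγ : IsIndecomposableIn {β ∈ R | 0 < ⟪u, β⟫} γ)
    (hδ : IsIndecomposableIn {β ∈ R | 0 < ⟪u, β⟫} δ) (hγδ : γ ≠ δ) : ⟪γ, δ⟫ ≤ 0 := by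
  by_contra! h
  have hsub := hR.sub_mem_of_inner_pos hγ.1.1 hδ.1.1 h
  have hne := hu _ hsub (sub_ne_zero.mpr hγδ)
  have hγ0 : γ ≠ 0 := by rintro rfl; simpa using hγ.1.2
  have hδ0 : δ ≠ 0 := by rintro rfl; simpa using hδ.1.2
  rcases hne.lt_or_gt with hlt | hgt
  · refine hδ.2 ⟨δ - γ, ⟨by simpa using hR.neg_mem hsub, ?_⟩, γ, hγ.1, sub_ne_zero.mpr hγδ.symm,
      hγ0, by abel⟩
    rw [← neg_sub, inner_neg_right]
    linarith
  · exact hγ.2 ⟨γ - δ, ⟨hsub, hgt⟩, δ, hδ.1, sub_ne_zero.mpr hγδ, hδ0, by abel⟩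

theorem isBase_setOf_isIndecomposableIn (hR : IsGRS R)
    (hu : ∀ β ∈ R, β ≠ 0 → ⟪u, β⟫ ≠ 0) :
    IsBase R {γ | IsIndecomposableIn {β ∈ R | 0 < ⟪u, β⟫} γ} := by
  set S := {γ | IsIndecomposableIn {β ∈ R | 0 < ⟪u, β⟫} γ}
  have hcomb : ∀ β ∈ R, IsNonnegIntComb S β ∨ IsNonnegIntComb S (-β) := by
    intro β hβ
    rcases eq_or_ne β 0 with rfl | hβ0
    · exact .inl (IsNonnegIntComb.zero S)
    rcases (hu β hβ hβ0).lt_or_gt with hlt | hgt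
    · exact .inr (hR.finite.isNonnegIntComb_of_inner_pos (hR.neg_mem hβ) (by simpa using hlt))
    · exact .inl (hR.finite.isNonnegIntComb_of_inner_pos hβ hgt)
  refine ⟨fun γ hγ => hγ.1.1, ?_, ?_, hcomb⟩
  · refine LinearMap.BilinForm.linearIndependent_of_pairwise_le_zero (innerₗ E)
      (fun x hx => real_inner_self_pos.mpr hx) (innerₗ E u) _ (fun γ => γ.2.1.2) ?_
    exact fun γ δ hγδ =>
      inner_nonpos_of_isIndecomposableIn hR hu γ.2 δ.2 (Subtype.coe_ne_coe.mpr hγδ)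
  · refine eq_top_iff.mpr (hR.span_eq_top ▸ Submodule.span_le.mpr fun β hβ => ?_)
    rcases hcomb β hβ with h | h
    · exact h.mem_span
    · simpa using h.mem_span

end IsGRS

end Base

/-- Every primitive root belongs to some base. -/
theorem stmt2 (R : Set V) (hR : IsGRS R) (α : V) (hα : IsPrimitive R α) :
    ∃ S : Set V, IsBase R S ∧ α ∈ S := by
  obtain ⟨u, hu, hα_pos, hα_le⟩ := hα.exists_inner_ne_zero_inner_le hR
  refine ⟨_, hR.isBase_setOf_isIndecomposableIn hu, ⟨hα.1, hα_pos⟩, ?_⟩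
  rintro ⟨γ, ⟨hγR, hγ⟩, δ, ⟨-, hδ⟩, -, -, rfl⟩
  have hγ_ge := hα_le γ hγR hγ
  rw [inner_add_right] at hγ_ge
  linarith
end

section
/- Let (R,V) be a generalized root system, let α ∈ R be nonzero, let β ∈ R, and let k < s be integers such that β + kα ∈ R and β + sα ∈ R. Then β + tα ∈ R for every integer t with k ≤ t ≤ s. -/
open scoped RealInnerProductSpace

variable {V : Type*} [NormedAddCommGroup V] [InnerProductSpace ℝ V] [FiniteDimensional ℝ V]

namespace IsGRS

variable {E : Type*} [NormedAddCommGroup E] [InnerProductSpace ℝ E] {R : Set E}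

theorem add_mem_or_sub_mem_of_inner_lt (hR : IsGRS R) {α γ δ : E} (hα : α ∈ R)
    (hγ : γ ∈ R) (hδ : δ ∈ R) (hlt : ⟪γ, α⟫ < ⟪δ, α⟫) : γ + α ∈ R ∨ δ - α ∈ R := by
  rcases lt_or_ge ⟪γ, α⟫ 0 with hneg | hnonneg
  · exact .inl ((hR.2.2.2 γ hγ α hα).1 hneg)
  · exact .inr ((hR.2.2.2 δ hδ α hα).2.1 (hnonneg.trans_lt hlt))

/-- `⟪β + zα, α⟫` is strictly increasing in `z`, so it is negative at `p` or positive at `q`. -/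
theorem add_one_mem_or_sub_one_mem_of_lt (hR : IsGRS R) {α : E} (hα : α ∈ R)
    (hα0 : α ≠ 0) (β : E) {p q : ℤ} (hpq : p < q) (hp : β + (p : ℝ) • α ∈ R)
    (hq : β + (q : ℝ) • α ∈ R) :
    β + ((p + 1 : ℤ) : ℝ) • α ∈ R ∨ β + ((q - 1 : ℤ) : ℝ) • α ∈ R := by
  have hinner (z : ℤ) : ⟪β + (z : ℝ) • α, α⟫ = ⟪β, α⟫ + z * ⟪α, α⟫ := by
    rw [inner_add_left, real_inner_smul_left]
  have hlt : ⟪β + (p : ℝ) • α, α⟫ < ⟪β + (q : ℝ) • α, α⟫ := by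
    have hαα : 0 < ⟪α, α⟫ := real_inner_self_pos.2 hα0
    have hpq' : (p : ℝ) < q := by exact_mod_cast hpq
    rw [hinner, hinner]
    gcongr
  convert hR.add_mem_or_sub_mem_of_inner_lt hα hp hq hlt using 2 <;>
    · push_cast
      module

theorem root_string_mem (hR : IsGRS R) {α : E} (hα : α ∈ R) (hα0 : α ≠ 0) (β : E)
    {p q : ℤ} (hp : β + (p : ℝ) • α ∈ R) (hq : β + (q : ℝ) • α ∈ R) {t : ℤ}
    (hpt : p ≤ t) (htq : t ≤ q) : β + (t : ℝ) • α ∈ R := by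
  obtain ⟨n, rfl⟩ : ∃ n : ℕ, q = p + n := ⟨(q - p).toNat, by omega⟩
  induction n generalizing p with
  | zero => rwa [show t = p by omega]
  | succ n ih =>
    rcases hR.add_one_mem_or_sub_one_mem_of_lt hα hα0 β (by omega) hp hq with hp' | hq'
    · rcases eq_or_lt_of_le hpt with rfl | hpt
      · exact hp
      · exact ih hp' hpt (by rwa [show p + ↑(n + 1) = p + 1 + n by omega] at hq) (by omega)
    · rcases eq_or_lt_of_le htq with rfl | htq
      · exact hq
      · exact ih hp hpt (by rwa [show p + ↑(n + 1) - 1 = p + n by omega] at hq') (by omega)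

end IsGRS

theorem stmt4_general (R : Set V) (hR : IsGRS R) (α β : V) (hα : α ∈ R) (hα0 : α ≠ 0)
    (k s : ℤ)
    (hk : β + (k : ℝ) • α ∈ R) (hs : β + (s : ℝ) • α ∈ R) :
    ∀ t : ℤ, k ≤ t → t ≤ s → β + (t : ℝ) • α ∈ R :=
  fun _ hkt hts => hR.root_string_mem hα hα0 β hk hs hkt hts

/-- Root strings are unbroken. -/
theorem stmt4 (R : Set V) (hR : IsGRS R) (α β : V) (hα : α ∈ R) (hα0 : α ≠ 0)
    (hβ : β ∈ R) (k s : ℤ) (hks : k < s)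
    (hk : β + (k : ℝ) • α ∈ R) (hs : β + (s : ℝ) • α ∈ R) :
    ∀ t : ℤ, k ≤ t → t ≤ s → β + (t : ℝ) • α ∈ R :=
  stmt4_general R hR α β hα hα0 k s hk hs
end

section
/- Let (R,V) be a generalized root system and let α, β, γ ∈ R be such that γ + α + β ∈ R but α + β ∉ R. If γ + α ≠ 0, then γ + β ∈ R. -/
open scoped RealInnerProductSpace

variable {V : Type*} [NormedAddCommGroup V] [InnerProductSpace ℝ V] [FiniteDimensional ℝ V]

/-!
Suppose `γ + β ∉ R`. Since neither `α + β = (γ + α + β) - γ` nor `γ + β = (γ + α + β) - α`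
is a root, the GRS axioms force `⟪α, β⟫ ≥ 0`, `⟪γ, β⟫ ≥ 0`, `⟪γ + α + β, α⟫ ≤ 0` and
`⟪γ + α + β, γ⟫ ≤ 0`. Adding the last two gives
`⟪γ + α + β, γ + α⟫ ≤ 0`, whereas this equals `‖γ + α‖² + ⟪β, γ⟫ + ⟪β, α⟫ > 0`.
-/

section

variable {E : Type*} [NormedAddCommGroup E] [InnerProductSpace ℝ E] {R : Set E}

theorem IsGRS.inner_nonneg_of_add_notMem (hR : IsGRS R) {α β : E} (hα : α ∈ R) (hβ : β ∈ R)
    (h : α + β ∉ R) : 0 ≤ ⟪α, β⟫ :=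
  not_lt.1 fun hneg => h ((hR.2.2.2 α hα β hβ).1 hneg)

theorem IsGRS.inner_nonpos_of_sub_notMem (hR : IsGRS R) {α β : E} (hα : α ∈ R) (hβ : β ∈ R)
    (h : α - β ∉ R) : ⟪α, β⟫ ≤ 0 :=
  not_lt.1 fun hpos => h ((hR.2.2.2 α hα β hβ).2.1 hpos)

end

/-- If `α, β, γ, γ+α+β ∈ R`, `α+β ∉ R` and `γ+α ≠ 0`, then `γ+β ∈ R`. -/
theorem stmt9 (R : Set V) (hR : IsGRS R) (α β γ : V)
    (hα : α ∈ R) (hβ : β ∈ R) (hγ : γ ∈ R) (hsum : γ + α + β ∈ R)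
    (hab : α + β ∉ R) (hga : γ + α ≠ 0) : γ + β ∈ R := by
  by_contra hgb
  have hαβ : 0 ≤ ⟪α, β⟫ := hR.inner_nonneg_of_add_notMem hα hβ hab
  have hγβ : 0 ≤ ⟪γ, β⟫ := hR.inner_nonneg_of_add_notMem hγ hβ hgb
  have hsumα : ⟪γ + α + β, α⟫ ≤ 0 :=
    hR.inner_nonpos_of_sub_notMem hsum hα (by rwa [add_right_comm, add_sub_cancel_right])
  have hsumγ : ⟪γ + α + β, γ⟫ ≤ 0 :=
    hR.inner_nonpos_of_sub_notMem hsum hγ (by rwa [add_assoc, add_sub_cancel_left])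
  have hnorm : 0 < ‖γ + α‖ ^ 2 := pow_pos (norm_pos_iff.2 hga) 2
  have hexpand : ⟪γ + α + β, γ⟫ + ⟪γ + α + β, α⟫ = ‖γ + α‖ ^ 2 + ⟪γ, β⟫ + ⟪α, β⟫ := by
    rw [← inner_add_right, inner_add_left, real_inner_self_eq_norm_sq, inner_add_right,
      real_inner_comm γ β, real_inner_comm α β]
    ring
  linarith
end

section
/- Let (R,V) be a generalized root system, S a base of R, and I ⊆ S. Let V_I be the linear span of I and π_I : V → V_I^⊥ the orthogonal projection onto the orthogonal complement of V_I. Then (π_I(R), V_I^⊥) is a generalized root system, and the set π_I(S) \ {0} = {π_I(α) : α ∈ S \ I} is a base of it. -/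
open scoped RealInnerProductSpace

variable {V : Type*} [NormedAddCommGroup V] [InnerProductSpace ℝ V] [FiniteDimensional ℝ V]

/-!
Project away from one root `a` at a time. In a fibre of `π = (ℝ ∙ a)ᗮ.starProjection`, the
axioms applied to a root and `a` move it by `± a` towards `a⟂`, so `π γ` has lifts in `R`
whose `a`-coefficient lies in `(-1, 0]` and lifts with coefficient in `[0, 1)`. For suitable
such lifts `α', β'` the `a`-part of `⟪α', β'⟫` has a known sign, so each axiom for `π α, π β`
is inherited from the same axiom for `α', β'`. Projecting away from `span I` is the
composite of such single-root projections. For the base, `π_I` kills exactly `span I`, so it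
is injective on `span (S \ I)`, and it maps nonnegative integer combinations to such.
-/

open Set Submodule

variable {E F : Type*} [NormedAddCommGroup E] [InnerProductSpace ℝ E]
  [NormedAddCommGroup F] [InnerProductSpace ℝ F]

/-- The closure clause of `IsGRS`. Unlike spanning, it survives regarding `R` inside a larger
space, so projections can be handled as endomorphisms of the ambient space. -/
def GRSAxioms (R : Set E) : Prop :=
  ∀ α ∈ R, ∀ β ∈ R,
    (⟪α, β⟫ < 0 → α + β ∈ R) ∧
    (0 < ⟪α, β⟫ → α - β ∈ R) ∧
    (⟪α, β⟫ = 0 → (α + β ∈ R ↔ α - β ∈ R))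

namespace GRSAxioms

variable {R : Set E}

lemma zero_mem (hR : GRSAxioms R) {α : E} (hα : α ∈ R) : (0 : E) ∈ R := by
  by_cases h0 : α = 0
  · exact h0 ▸ hα
  · simpa using (hR α hα α hα).2.1 (real_inner_self_pos.mpr h0)

lemma neg_mem (hR : GRSAxioms R) {α : E} (hα : α ∈ R) : -α ∈ R := by
  simpa using ((hR 0 (hR.zero_mem hα) α hα).2.2 (inner_zero_left α)).mp (by simpa using hα)

lemma of_image_linearIsometry (f : F →ₗᵢ[ℝ] E) {T : Set F} (h : GRSAxioms (f '' T)) :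
    GRSAxioms T := by
  intro x hx y hy
  have := h (f x) (mem_image_of_mem f hx) (f y) (mem_image_of_mem f hy)
  simpa only [f.inner_map_map, ← map_add, ← map_sub, f.injective.mem_set_image] using this

end GRSAxioms

section Line

variable (a : E)

noncomputable def lineCoeff (x : E) : ℝ := ⟪a, x⟫ / ‖a‖ ^ 2

lemma starProjection_orthogonal_add_lineCoeff_smul (x : E) :
    (ℝ ∙ a)ᗮ.starProjection x + lineCoeff a x • a = x := by
  have hline : (ℝ ∙ a).starProjection x = lineCoeff a x • a := by
    rw [starProjection_singleton]
    simp [lineCoeff]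
  rw [← hline, add_comm]
  exact starProjection_add_starProjection_orthogonal x

lemma inner_eq_inner_starProjection_add (x y : E) :
    ⟪x, y⟫ = ⟪(ℝ ∙ a)ᗮ.starProjection x, (ℝ ∙ a)ᗮ.starProjection y⟫
      + lineCoeff a x * lineCoeff a y * ‖a‖ ^ 2 := by
  have horth (z : E) : ⟪(ℝ ∙ a)ᗮ.starProjection z, a⟫ = 0 :=
    mem_orthogonal_singleton_iff_inner_left.mp (starProjection_apply_mem _ z)
  conv_lhs => rw [← starProjection_orthogonal_add_lineCoeff_smul a x,
    ← starProjection_orthogonal_add_lineCoeff_smul a y]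
  simp only [inner_add_left, inner_add_right, real_inner_smul_left, real_inner_smul_right,
    horth, real_inner_comm _ a, real_inner_self_eq_norm_sq]
  ring

lemma starProjection_orthogonal_span_singleton_add_self (x : E) :
    (ℝ ∙ a)ᗮ.starProjection (x + a) = (ℝ ∙ a)ᗮ.starProjection x := by
  rw [map_add, starProjection_orthogonalComplement_singleton_eq_zero, add_zero]

lemma starProjection_orthogonal_span_singleton_sub_self (x : E) :
    (ℝ ∙ a)ᗮ.starProjection (x - a) = (ℝ ∙ a)ᗮ.starProjection x := by
  rw [map_sub, starProjection_orthogonalComplement_singleton_eq_zero, sub_zero]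

variable {a}

lemma mem_orthogonal_of_lineCoeff_eq_zero {x : E} (h : lineCoeff a x = 0) : x ∈ (ℝ ∙ a)ᗮ := by
  have hx := starProjection_orthogonal_add_lineCoeff_smul a x
  rw [h, zero_smul, add_zero] at hx
  exact hx ▸ starProjection_apply_mem _ x

lemma lineCoeff_zero_left (x : E) : lineCoeff 0 x = 0 := by simp [lineCoeff]

lemma lineCoeff_add_self (ha : a ≠ 0) (x : E) : lineCoeff a (x + a) = lineCoeff a x + 1 := by
  have : ‖a‖ ^ 2 ≠ 0 := by positivity
  rw [lineCoeff, lineCoeff, inner_add_right, real_inner_self_eq_norm_sq, add_div, div_self this]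

lemma lineCoeff_sub_self (ha : a ≠ 0) (x : E) : lineCoeff a (x - a) = lineCoeff a x - 1 := by
  have : ‖a‖ ^ 2 ≠ 0 := by positivity
  rw [lineCoeff, lineCoeff, inner_sub_right, real_inner_self_eq_norm_sq, sub_div, div_self this]

lemma lineCoeff_neg (x : E) : lineCoeff a (-x) = -lineCoeff a x := by
  rw [lineCoeff, lineCoeff, inner_neg_right, neg_div]

lemma inner_pos_of_lineCoeff_pos {x : E} (h : 0 < lineCoeff a x) : 0 < ⟪x, a⟫ := by
  have ha : a ≠ 0 := by
    rintro rfl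
    norm_num [lineCoeff_zero_left] at h
  rw [real_inner_comm]
  exact (div_pos_iff_of_pos_right (by positivity)).mp h

lemma inner_neg_of_lineCoeff_neg {x : E} (h : lineCoeff a x < 0) : ⟪x, a⟫ < 0 := by
  simpa using inner_pos_of_lineCoeff_pos (x := -x) (by rw [lineCoeff_neg]; linarith)

end Line

namespace GRSAxioms

variable {R : Set E} {a : E}

local notation "π" => starProjection (ℝ ∙ a)ᗮ

/-- Minimising `|lineCoeff a δ|` over the fibre works because a root with `|lineCoeff| ≥ 1`
can be moved one step towards `0` along its `a`-string. -/
lemma exists_abs_lineCoeff_lt_one (hfin : R.Finite) (hR : GRSAxioms R) (ha : a ∈ R) {γ : E}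
    (hγ : γ ∈ R) : ∃ δ ∈ R, π δ = π γ ∧ |lineCoeff a δ| < 1 := by
  obtain ⟨δ, ⟨hδ, hπ⟩, hmin⟩ := exists_min_image {δ ∈ R | π δ = π γ} (fun δ => |lineCoeff a δ|)
    (hfin.subset (sep_subset _ _)) ⟨γ, hγ, rfl⟩
  refine ⟨δ, hδ, hπ, ?_⟩
  by_contra! hge
  have ha0 : a ≠ 0 := by
    rintro rfl
    norm_num [lineCoeff_zero_left] at hge
  rcases le_or_gt (lineCoeff a δ) 0 with hneg | hpos
  · rw [abs_of_nonpos hneg] at hge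
    have hstep := hmin (δ + a) ⟨(hR δ hδ a ha).1 (inner_neg_of_lineCoeff_neg (by linarith)),
      by rw [starProjection_orthogonal_span_singleton_add_self, hπ]⟩
    rw [lineCoeff_add_self ha0, abs_of_nonpos hneg, abs_of_nonpos (by linarith)] at hstep
    linarith
  · rw [abs_of_pos hpos] at hge
    have hstep := hmin (δ - a) ⟨(hR δ hδ a ha).2.1 (inner_pos_of_lineCoeff_pos hpos),
      by rw [starProjection_orthogonal_span_singleton_sub_self, hπ]⟩
    rw [lineCoeff_sub_self ha0, abs_of_pos hpos, abs_of_nonneg (by linarith)] at hstep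
    linarith

lemma exists_lineCoeff_mem_Ioc (hfin : R.Finite) (hR : GRSAxioms R) (ha : a ∈ R) {γ : E}
    (hγ : γ ∈ R) : ∃ δ ∈ R, π δ = π γ ∧ lineCoeff a δ ∈ Ioc (-1) 0 := by
  obtain ⟨δ, hδ, hπ, hlt⟩ := hR.exists_abs_lineCoeff_lt_one hfin ha hγ
  obtain ⟨hlo, hhi⟩ := abs_lt.mp hlt
  rcases le_or_gt (lineCoeff a δ) 0 with hneg | hpos
  · exact ⟨δ, hδ, hπ, hlo, hneg⟩
  · have ha0 : a ≠ 0 := by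
      rintro rfl
      norm_num [lineCoeff_zero_left] at hpos
    refine ⟨δ - a, (hR δ hδ a ha).2.1 (inner_pos_of_lineCoeff_pos hpos),
      by rw [starProjection_orthogonal_span_singleton_sub_self, hπ], ?_⟩
    rw [lineCoeff_sub_self ha0]
    constructor <;> linarith

lemma exists_lineCoeff_mem_Ico (hfin : R.Finite) (hR : GRSAxioms R) (ha : a ∈ R) {γ : E}
    (hγ : γ ∈ R) : ∃ δ ∈ R, π δ = π γ ∧ lineCoeff a δ ∈ Ico 0 1 := by
  obtain ⟨δ, hδ, hπ, hlo, hhi⟩ := hR.exists_lineCoeff_mem_Ioc hfin ha (hR.neg_mem hγ)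
  refine ⟨-δ, hR.neg_mem hδ, by rw [map_neg, hπ, map_neg, neg_neg], ?_⟩
  rw [lineCoeff_neg]
  constructor <;> linarith

lemma sub_mem_image_of_mem_orthogonal (hR : GRSAxioms R) {x b : E} (hb : b ∈ R)
    (hba : b ∈ (ℝ ∙ a)ᗮ) (hxb : ⟪x, b⟫ = 0) (hadd : x + b ∈ π '' R) : x - b ∈ π '' R := by
  obtain ⟨σ, hσ, hπσ⟩ := hadd
  by_cases hb0 : b = 0
  · exact ⟨σ, hσ, by rw [hπσ, hb0, add_zero, sub_zero]⟩
  have hπb : π b = b := starProjection_eq_self_iff.mpr hba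
  have hinner (y : E) : ⟪y, b⟫ = ⟪π y, b⟫ := by rw [inner_starProjection_left_eq_right, hπb]
  have hπ' : π (σ - b) = x := by rw [map_sub, hπσ, hπb, add_sub_cancel_right]
  have h₁ : σ - b ∈ R := (hR σ hσ b hb).2.1 <| by
    rw [hinner, hπσ, inner_add_left, hxb, zero_add]
    exact real_inner_self_pos.mpr hb0
  have h₂ : σ - b - b ∈ R :=
    ((hR _ h₁ b hb).2.2 (by rw [hinner, hπ', hxb])).mp (by rwa [sub_add_cancel])
  exact ⟨σ - b - b, h₂, by rw [map_sub, hπ', hπb]⟩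

lemma add_mem_image_of_inner_neg (hfin : R.Finite) (hR : GRSAxioms R) (ha : a ∈ R) {α β : E}
    (hα : α ∈ R) (hβ : β ∈ R) (h : ⟪π α, π β⟫ < 0) : π α + π β ∈ π '' R := by
  obtain ⟨α', hα'R, hπα, -, hα'c⟩ := hR.exists_lineCoeff_mem_Ioc hfin ha hα
  obtain ⟨β', hβ'R, hπβ, hβ'c, -⟩ := hR.exists_lineCoeff_mem_Ico hfin ha hβ
  have hneg : ⟪α', β'⟫ < 0 := by
    rw [inner_eq_inner_starProjection_add a, hπα, hπβ]
    linarith [mul_nonpos_of_nonpos_of_nonneg (mul_nonpos_of_nonpos_of_nonneg hα'c hβ'c)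
      (sq_nonneg ‖a‖)]
  exact ⟨α' + β', (hR α' hα'R β' hβ'R).1 hneg, by rw [map_add, hπα, hπβ]⟩

lemma sub_mem_image_of_inner_pos (hfin : R.Finite) (hR : GRSAxioms R) (ha : a ∈ R) {α β : E}
    (hα : α ∈ R) (hβ : β ∈ R) (h : 0 < ⟪π α, π β⟫) : π α - π β ∈ π '' R := by
  obtain ⟨α', hα'R, hπα, -, hα'c⟩ := hR.exists_lineCoeff_mem_Ioc hfin ha hα
  obtain ⟨β', hβ'R, hπβ, -, hβ'c⟩ := hR.exists_lineCoeff_mem_Ioc hfin ha hβ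
  have hpos : 0 < ⟪α', β'⟫ := by
    rw [inner_eq_inner_starProjection_add a, hπα, hπβ]
    linarith [mul_nonneg (mul_nonneg_of_nonpos_of_nonpos hα'c hβ'c) (sq_nonneg ‖a‖)]
  exact ⟨α' - β', (hR α' hα'R β' hβ'R).2.1 hpos, by rw [map_sub, hπα, hπβ]⟩

/-- Take lifts with `a`-coefficient in `(-1, 0]`. One with coefficient `0` lies in `a⟂`, and
`sub_mem_image_of_mem_orthogonal` applies; otherwise both coefficients are negative and the
lifts have positive inner product. -/
lemma sub_mem_image_of_inner_eq_zero (hfin : R.Finite) (hR : GRSAxioms R) (ha : a ∈ R)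
    {α β : E} (hα : α ∈ R) (hβ : β ∈ R) (h : ⟪π α, π β⟫ = 0) (hadd : π α + π β ∈ π '' R) :
    π α - π β ∈ π '' R := by
  obtain ⟨α', hα'R, hπα, -, hα'c⟩ := hR.exists_lineCoeff_mem_Ioc hfin ha hα
  obtain ⟨β', hβ'R, hπβ, -, hβ'c⟩ := hR.exists_lineCoeff_mem_Ioc hfin ha hβ
  rcases hβ'c.eq_or_lt with hβ0 | hβ0
  · have hβ'a := mem_orthogonal_of_lineCoeff_eq_zero hβ0
    rw [← hπβ, starProjection_eq_self_iff.mpr hβ'a] at h hadd ⊢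
    exact hR.sub_mem_image_of_mem_orthogonal hβ'R hβ'a h hadd
  rcases hα'c.eq_or_lt with hα0 | hα0
  · have hα'a := mem_orthogonal_of_lineCoeff_eq_zero hα0
    rw [← hπα, starProjection_eq_self_iff.mpr hα'a] at h hadd ⊢
    obtain ⟨δ, hδ, hπδ⟩ := hR.sub_mem_image_of_mem_orthogonal hα'R hα'a
      (by rw [real_inner_comm, h]) (by rwa [add_comm])
    exact ⟨-δ, hR.neg_mem hδ, by rw [map_neg, hπδ, neg_sub]⟩
  have ha0 : a ≠ 0 := by
    rintro rfl
    simp [lineCoeff_zero_left] at hα0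
  have hpos : 0 < ⟪α', β'⟫ := by
    rw [inner_eq_inner_starProjection_add a, hπα, hπβ, h, zero_add]
    exact mul_pos (mul_pos_of_neg_of_neg hα0 hβ0) (by positivity)
  exact ⟨α' - β', (hR α' hα'R β' hβ'R).2.1 hpos, by rw [map_sub, hπα, hπβ]⟩

theorem image_starProjection_orthogonal_singleton (hfin : R.Finite) (hR : GRSAxioms R)
    (ha : a ∈ R) : GRSAxioms (π '' R) := by
  rintro _ ⟨α, hα, rfl⟩ _ ⟨β, hβ, rfl⟩
  refine ⟨hR.add_mem_image_of_inner_neg hfin ha hα hβ, hR.sub_mem_image_of_inner_pos hfin ha hα hβ,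
    fun h => ⟨hR.sub_mem_image_of_inner_eq_zero hfin ha hα hβ h, fun hsub => ?_⟩⟩
  have h' : ⟪π α, π (-β)⟫ = 0 := by rw [map_neg, inner_neg_right, h, neg_zero]
  have := hR.sub_mem_image_of_inner_eq_zero hfin ha hα (hR.neg_mem hβ) h'
    (by rwa [map_neg, ← sub_eq_add_neg])
  rwa [map_neg, sub_neg_eq_add] at this

end GRSAxioms

lemma sup_span_singleton_starProjection_orthogonal (K : Submodule ℝ E)
    [K.HasOrthogonalProjection] (v : E) : K ⊔ ℝ ∙ Kᗮ.starProjection v = K ⊔ ℝ ∙ v := by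
  apply le_antisymm <;> refine sup_le le_sup_left ((span_singleton_le_iff_mem _ _).mpr ?_)
  · rw [starProjection_orthogonal_val]
    exact sub_mem (mem_sup_right (mem_span_singleton_self v))
      (mem_sup_left (starProjection_apply_mem K v))
  · have hv := add_mem (mem_sup_left (starProjection_apply_mem K v))
      (mem_sup_right (mem_span_singleton_self (Kᗮ.starProjection v)))
    rwa [starProjection_add_starProjection_orthogonal] at hv

lemma Submodule.IsOrtho.starProjection_orthogonal_sup {K L : Submodule ℝ E}
    [K.HasOrthogonalProjection] [L.HasOrthogonalProjection] [(K ⊔ L).HasOrthogonalProjection]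
    (h : K ⟂ L) (x : E) :
    (K ⊔ L)ᗮ.starProjection x = Lᗮ.starProjection (Kᗮ.starProjection x) := by
  apply eq_starProjection_of_mem_orthogonal
  · rw [← inf_orthogonal]
    refine ⟨?_, starProjection_apply_mem _ _⟩
    rw [starProjection_orthogonal_val]
    exact sub_mem (starProjection_apply_mem _ x) (h.ge (starProjection_apply_mem L _))
  · apply le_orthogonal_orthogonal
    rw [starProjection_orthogonal_val, starProjection_orthogonal_val,
      show ∀ y z : E, x - (x - y - z) = y + z from fun y z => by abel]
    exact add_mem (mem_sup_left (starProjection_apply_mem K x))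
      (mem_sup_right (starProjection_apply_mem L _))

theorem GRSAxioms.image_starProjection_orthogonal_span [FiniteDimensional ℝ E] {R J : Set E}
    (hfin : R.Finite) (hR : GRSAxioms R) (hJ : J ⊆ R) :
    GRSAxioms ((span ℝ J)ᗮ.starProjection '' R) := by
  induction J, hfin.subset hJ using Set.Finite.induction_on with
  | empty => simpa [starProjection_top] using hR
  | @insert a J _ _ ih =>
    set K := span ℝ J
    have hK : K ⟂ ℝ ∙ Kᗮ.starProjection a :=
      (isOrtho_iff_le.mpr ((span_singleton_le_iff_mem _ _).mpr
        (starProjection_apply_mem _ a))).symm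
    have hcomp : (span ℝ (insert a J))ᗮ.starProjection '' R =
        (ℝ ∙ Kᗮ.starProjection a)ᗮ.starProjection '' (Kᗮ.starProjection '' R) := by
      rw [image_image, span_insert, sup_comm, ← sup_span_singleton_starProjection_orthogonal]
      exact image_congr fun x _ => hK.starProjection_orthogonal_sup x
    rw [hcomp]
    exact (ih (hJ.trans' (subset_insert a J))).image_starProjection_orthogonal_singleton
      (hfin.image _) (mem_image_of_mem _ (hJ (mem_insert a J)))

lemma LinearIndepOn.mem_span_iff_mem_of_subset {K M : Type*} [DivisionRing K] [AddCommGroup M]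
    [Module K M] {S I : Set M} (hS : LinearIndepOn K id S) (hI : I ⊆ S) {v : M} (hv : v ∈ S) :
    v ∈ span K I ↔ v ∈ I :=
  ⟨fun h => (hS.mono hI).mem_span_iff_id.mp h (hS.mono (insert_subset hv hI)),
    fun h => subset_span h⟩

lemma LinearIndepOn.image_sdiff_of_ker_eq_span {K M N : Type*} [DivisionRing K] [AddCommGroup M]
    [Module K M] [AddCommGroup N] [Module K N] {S I : Set M} (hS : LinearIndepOn K id S)
    (hI : I ⊆ S) {f : M →ₗ[K] N} (hf : LinearMap.ker f = span K I) :
    LinearIndepOn K id (f '' (S \ I)) := by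
  refine (hS.mono sdiff_subset).image ?_
  rw [← sdiff_union_of_subset hI] at hS
  exact hf ▸ ((linearIndepOn_id_union_iff disjoint_sdiff_left).mp hS).2.2

lemma isNonnegIntComb_iff_mem_closure {S : Set E} {v : E} :
    IsNonnegIntComb S v ↔ v ∈ AddSubmonoid.closure S := by
  classical
  constructor
  · rintro ⟨c, hsupp, hnn, rfl⟩
    refine AddSubmonoid.sum_mem _ fun α hα => ?_
    show (c α : ℝ) • α ∈ _
    rw [← Int.toNat_of_nonneg (hnn α), Int.cast_natCast, Nat.cast_smul_eq_nsmul]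
    exact nsmul_mem (AddSubmonoid.subset_closure (hsupp hα)) _
  · intro hv
    induction hv using AddSubmonoid.closure_induction with
    | mem α hα =>
      refine ⟨Finsupp.single α 1, ?_, fun β => ?_, by simp⟩
      · simpa using hα
      · rw [Finsupp.single_apply]
        split_ifs <;> norm_num
    | zero => exact ⟨0, by simp, fun _ => le_rfl, by simp⟩
    | add x y _ _ hx hy =>
      obtain ⟨c, hcS, hc, rfl⟩ := hx
      obtain ⟨d, hdS, hd, rfl⟩ := hy
      refine ⟨c + d, ?_, fun α => add_nonneg (hc α) (hd α), ?_⟩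
      · exact (Finset.coe_subset.mpr Finsupp.support_add).trans
          (by simpa using union_subset hcS hdS)
      · rw [Finsupp.sum_add_index'] <;> simp [add_smul]

lemma IsNonnegIntComb.map {S : Set E} {v : E} (f : E →ₗ[ℝ] F) (h : IsNonnegIntComb S v) :
    IsNonnegIntComb (f '' S \ {0}) (f v) := by
  rw [isNonnegIntComb_iff_mem_closure] at h ⊢
  rw [AddSubmonoid.closure_sdiff_singleton_zero, ← AddMonoidHom.map_mclosure]
  exact AddSubmonoid.mem_map_of_mem f h

section ProjAway

variable {R S I : Set V}

lemma projAway_eq (I : Set V) : projAway I = (span ℝ I)ᗮ.orthogonalProjectionOnto := rfl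

lemma projAway_eq_zero_iff {v : V} : projAway I v = 0 ↔ v ∈ span ℝ I := by
  rw [projAway_eq, orthogonalProjectionOnto_eq_zero_iff, orthogonal_orthogonal]

lemma span_projAway_image {s : Set V} (hs : span ℝ s = ⊤) : span ℝ (projAway I '' s) = ⊤ := by
  rw [projAway_eq, ← ContinuousLinearMap.coe_coe, span_image, hs, Submodule.map_top,
    LinearMap.range_eq_top]
  exact fun y => ⟨y, orthogonalProjectionOnto_mem_subspace_eq_self y⟩

theorem IsGRS.image_projAway (hR : IsGRS R) (hIR : I ⊆ R) : IsGRS (projAway I '' R) := by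
  obtain ⟨hne, hfin, hspan, hax⟩ := hR
  refine ⟨hne.image _, hfin.image _, span_projAway_image hspan, ?_⟩
  apply GRSAxioms.of_image_linearIsometry (span ℝ I)ᗮ.subtypeₗᵢ
  rw [image_image]
  exact GRSAxioms.image_starProjection_orthogonal_span hfin hax hIR

lemma projAway_image_sdiff_zero (hS : LinearIndepOn ℝ id S) (hI : I ⊆ S) :
    projAway I '' S \ {0} = projAway I '' (S \ I) := by
  ext z
  simp only [mem_sdiff, mem_image, mem_singleton_iff]
  constructor
  · rintro ⟨⟨α, hα, rfl⟩, h0⟩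
    exact ⟨α, ⟨hα, fun hαI => h0 (projAway_eq_zero_iff.mpr (subset_span hαI))⟩, rfl⟩
  · rintro ⟨α, ⟨hα, hαI⟩, rfl⟩
    exact ⟨⟨α, hα, rfl⟩,
      fun h0 => hαI ((hS.mem_span_iff_mem_of_subset hI hα).mp (projAway_eq_zero_iff.mp h0))⟩

theorem IsBase.image_projAway (hS : IsBase R S) (hI : I ⊆ S) :
    IsBase (projAway I '' R) (projAway I '' S \ {0}) := by
  obtain ⟨hSR, hSli, hSspan, hcomb⟩ := hS
  set f : V →ₗ[ℝ] (span ℝ I)ᗮ := (span ℝ I)ᗮ.orthogonalProjectionOnto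
  refine ⟨sdiff_subset.trans (image_mono hSR), ?_,
    (span_sdiff_singleton_zero).trans (span_projAway_image hSspan), ?_⟩
  · rw [projAway_image_sdiff_zero hSli hI]
    exact LinearIndepOn.image_sdiff_of_ker_eq_span hSli hI (f := f)
      (by rw [ker_orthogonalProjectionOnto, orthogonal_orthogonal])
  · rintro _ ⟨β, hβ, rfl⟩
    have hf : projAway I = f := rfl
    rw [hf, ← map_neg]
    exact (hcomb β hβ).imp (IsNonnegIntComb.map f) (IsNonnegIntComb.map f)

end ProjAway

/-- The quotient `(π_I(R), V_I^⊥)` is a GRS, and `π_I(S) \ {0}`, which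
equals `{π_I(α) : α ∈ S \ I}`, is a base of it. -/
theorem stmt12 (R S I : Set V) (hR : IsGRS R) (hS : IsBase R S) (hI : I ⊆ S) :
    IsGRS (projAway I '' R) ∧
    (projAway I '' S) \ {0} = projAway I '' (S \ I) ∧
    IsBase (projAway I '' R) ((projAway I '' S) \ {0}) :=
  ⟨hR.image_projAway (hI.trans hS.1), projAway_image_sdiff_zero hS.2.1 hI, hS.image_projAway hI⟩
end
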